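/- arXiv:math/0701306 — 9 statements merged into one kernel-verified Lean document; each statement's English description precedes it below -/
import Mathlib

section
/- Let A be a unital Banach *-algebra and let a, b be two commuting elements of A. Then the spectrum of a is contained in the set sp(b) + r_λ(b−a)·D, where D is the closed unit disc; that is, for every μ ∈ sp(a) there exists λ ∈ sp(b) with |μ − λ| ≤ r_λ(b − a). -/
/-!
Suppose `μ ∈ σ(a)` lies at distance more than `r(b - a)` from `σ(b)`. Then `u = μ - b` is
invertible and `r(u⁻¹) = |μ - λ|⁻¹` for a point `λ ∈ σ(b)` (the spectrum of `u⁻¹` is compact).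
For commuting elements Gelfand's formula makes the spectral radius submultiplicative, so
`r(u⁻¹ (b - a)) < 1`, and `μ - a = u (1 + u⁻¹ (b - a))` is invertible: a contradiction.
-/

open Filter ENNReal Topology

namespace spectrum

lemma spectralRadius_lt_top {𝕜 A : Type*} [NormedField 𝕜] [NormedRing A] [NormedAlgebra 𝕜 A]
    [CompleteSpace A] (a : A) : spectralRadius 𝕜 a < ⊤ :=
  (spectralRadius_le_pow_nnnorm_pow_one_div 𝕜 a 0).trans_lt (by finiteness)

lemma isUnit_one_add_of_spectralRadius_lt_one {𝕜 A : Type*} [NormedField 𝕜] [Ring A]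
    [Algebra 𝕜 A] {a : A} (h : spectralRadius 𝕜 a < 1) : IsUnit (1 + a) := by
  have h_neg_one : (-1 : 𝕜) ∈ resolventSet 𝕜 a :=
    mem_resolventSet_of_spectralRadius_lt (by simpa using h)
  rw [mem_resolventSet_iff, map_neg, map_one, ← neg_add'] at h_neg_one
  simpa using h_neg_one.neg

lemma nontrivial_of_mem {R A : Type*} [CommSemiring R] [Ring A] [Algebra R A] {a : A} {r : R}
    (h : r ∈ spectrum R a) : Nontrivial A :=
  not_subsingleton_iff_nontrivial.mp fun _ => h (isUnit_of_subsingleton _)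

variable {A : Type*} [NormedRing A] [NormedAlgebra ℂ A] [CompleteSpace A]

lemma spectralRadius_mul_le_of_commute {a b : A} (hab : Commute a b) :
    spectralRadius ℂ (a * b) ≤ spectralRadius ℂ a * spectralRadius ℂ b := by
  have h_prod : Tendsto
      (fun n : ℕ => (‖a ^ n‖₊ : ℝ≥0∞) ^ (1 / n : ℝ) * (‖b ^ n‖₊ : ℝ≥0∞) ^ (1 / n : ℝ))
      atTop (𝓝 (spectralRadius ℂ a * spectralRadius ℂ b)) :=
    ENNReal.Tendsto.mul (pow_nnnorm_pow_one_div_tendsto_nhds_spectralRadius a)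
      (Or.inr (spectralRadius_lt_top b).ne) (pow_nnnorm_pow_one_div_tendsto_nhds_spectralRadius b)
      (Or.inr (spectralRadius_lt_top a).ne)
  calc spectralRadius ℂ (a * b)
      ≤ atTop.liminf fun n : ℕ => (‖(a * b) ^ n‖₊ : ℝ≥0∞) ^ (1 / n : ℝ) :=
        spectralRadius_le_liminf_pow_nnnorm_pow_one_div ℂ (a * b)
    _ ≤ atTop.liminf
        (fun n : ℕ => (‖a ^ n‖₊ : ℝ≥0∞) ^ (1 / n : ℝ) * (‖b ^ n‖₊ : ℝ≥0∞) ^ (1 / n : ℝ)) := by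
        refine liminf_le_liminf (Eventually.of_forall fun n => ?_)
        rw [hab.mul_pow, ← ENNReal.mul_rpow_of_nonneg _ _ (by positivity)]
        exact ENNReal.rpow_le_rpow (mod_cast nnnorm_mul_le _ _) (by positivity)
    _ = spectralRadius ℂ a * spectralRadius ℂ b := h_prod.liminf_eq

lemma exists_nnnorm_inv_eq_spectralRadius_inv [Nontrivial A] (u : Aˣ) :
    ∃ z ∈ spectrum ℂ (u : A), (‖z‖₊ : ℝ≥0∞)⁻¹ = spectralRadius ℂ (↑u⁻¹ : A) := by
  obtain ⟨w, hw, hw_eq⟩ := exists_nnnorm_eq_spectralRadius (↑u⁻¹ : A)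
  have hw0 : w ≠ 0 := ne_zero_of_mem_of_unit hw
  refine ⟨w⁻¹, ?_, ?_⟩
  · simpa using (inv_mem_iff (r := Units.mk0 w hw0) (a := u⁻¹)).mp hw
  · rw [nnnorm_inv, ENNReal.coe_inv (nnnorm_ne_zero_iff.mpr hw0), inv_inv, hw_eq]

lemma _root_.Units.isUnit_add_of_spectralRadius_mul_lt_one (u : Aˣ) {c : A}
    (hc : Commute (u : A) c) (h : spectralRadius ℂ (↑u⁻¹ : A) * spectralRadius ℂ c < 1) :
    IsUnit ((u : A) + c) := by
  have h_one_add : IsUnit (1 + (↑u⁻¹ : A) * c) :=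
    isUnit_one_add_of_spectralRadius_lt_one <|
      (spectralRadius_mul_le_of_commute hc.units_inv_left).trans_lt h
  convert u.isUnit.mul h_one_add using 1
  rw [mul_add, mul_one, u.mul_inv_cancel_left]

end spectrum

theorem spectrum_subset_spectrum_add_spectralRadius_closedBall_general
    {A : Type*} [NormedRing A] [NormedAlgebra ℂ A] [CompleteSpace A]
    (a b : A) (hab : a * b = b * a) (μ : ℂ) (hμ : μ ∈ spectrum ℂ a) :
    ∃ lam ∈ spectrum ℂ b, (‖μ - lam‖₊ : ENNReal) ≤ spectralRadius ℂ (b - a) := by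
  have : Nontrivial A := spectrum.nontrivial_of_mem hμ
  by_contra! h_far
  have hμb : μ ∉ spectrum ℂ b := fun h => by simpa using h_far μ h
  obtain ⟨u, hu⟩ := spectrum.notMem_iff.mp hμb
  obtain ⟨z, hz, hz_eq⟩ := spectrum.exists_nnnorm_inv_eq_spectralRadius_inv u
  rw [hu, ← spectrum.singleton_sub_eq, Set.singleton_sub] at hz
  obtain ⟨lam, hlam, rfl⟩ := hz
  have h_comm : Commute (u : A) (b - a) := hu ▸
    (Algebra.commute_algebraMap_left μ _).sub_left ((Commute.refl b).sub_right (Commute.symm hab))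
  have h_small : spectralRadius ℂ (↑u⁻¹ : A) * spectralRadius ℂ (b - a) < 1 := by
    have h_lt := h_far lam hlam
    rwa [← hz_eq, ← ENNReal.div_eq_inv_mul, ENNReal.div_lt_iff (.inl (pos_of_gt h_lt).ne')
      (.inl ENNReal.coe_ne_top), one_mul]
  have h_unit := u.isUnit_add_of_spectralRadius_mul_lt_one h_comm h_small
  rw [hu, sub_add_sub_cancel] at h_unit
  exact hμ h_unit

/-- If `a` and `b` are commuting elements of a unital Banach `*`-algebra, then
`sp(a) ⊆ sp(b) + r_λ(b - a) • 𝔻`: every spectral value `μ` of `a` is within distance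
`r_λ(b - a)` of some spectral value `λ` of `b`. -/
theorem spectrum_subset_spectrum_add_spectralRadius_closedBall
    {A : Type*} [NormedRing A] [NormedAlgebra ℂ A] [CompleteSpace A]
    [StarRing A] [StarModule ℂ A]
    (a b : A) (hab : a * b = b * a) (μ : ℂ) (hμ : μ ∈ spectrum ℂ a) :
    ∃ lam ∈ spectrum ℂ b, (‖μ - lam‖₊ : ENNReal) ≤ spectralRadius ℂ (b - a) :=
  spectrum_subset_spectrum_add_spectralRadius_closedBall_general a b hab μ hμ
end

section
/- Let A be a unital complex Banach algebra and let x ∈ A be an element whose spectrum is contained in the open positive half-line (0,∞) of the reals. Then x has a unique square root y in A with sp(y) ⊆ [0,∞); moreover sp(y) ⊆ (0,∞), and y belongs to the closure of the (not necessarily unital) subalgebra of A generated by x. -/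
/-!
Choose `c > 0` bounding the spectrum of `x`. Then `t = x / c - 1` has spectral radius `< 1`, so the
binomial series `s = ∑ (1/2 choose n) tⁿ` converges absolutely, and by Chu–Vandermonde
`s² = 1 + t`; hence `y = √c • s` is a square root of `x` lying in the closed subalgebra generated
by `x`, which contains `1` because `(1 - x / c)ⁿ → 0`. A character of the bicommutant of `t`
(a commutative Banach algebra with the same spectra as `A`) maps `s` to `(1 + w) ^ (1/2)` for
some `w` with `‖w‖ < 1`, so `σ(y)` lies in the open right half-plane, and on the real line since
`σ(y)² = σ(x)`. Another square root `z` with `σ(z) ⊆ [0, ∞)` commutes with `x`, hence with `y`;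
then `σ(y + z) ⊆ σ(y) + σ(z)` misses `0`, and `(y - z)(y + z) = 0` forces `z = y`.
-/

open Filter Metric Topology
open scoped NNReal ENNReal Pointwise

theorem Subalgebra.isUnit_coe_centralizer_iff {R A : Type*} [CommSemiring R] [Semiring A]
    [Algebra R A] {s : Set A} {a : centralizer R s} : IsUnit (a : A) ↔ IsUnit a := by
  refine ⟨fun ha => ?_, fun ha => ha.map (centralizer R s).val⟩
  have hinv : (↑ha.unit⁻¹ : A) ∈ centralizer R s := fun g hg =>
    (Commute.units_inv_right (u := ha.unit) (a.2 g hg)).eq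
  exact ⟨⟨a, ⟨_, hinv⟩, Subtype.ext ha.mul_val_inv, Subtype.ext ha.val_inv_mul⟩, rfl⟩

theorem Subalgebra.spectrum_centralizer_eq {R A : Type*} [CommRing R] [Ring A]
    [Algebra R A] {s : Set A} (a : centralizer R s) : spectrum R a = spectrum R (a : A) :=
  Set.ext fun _ => not_congr isUnit_coe_centralizer_iff.symm

theorem spectralRadius_neg {𝕜 A : Type*} [NormedField 𝕜] [Ring A] [Algebra 𝕜 A] (a : A) :
    spectralRadius 𝕜 (-a) = spectralRadius 𝕜 a := by
  simp only [spectralRadius, ← spectrum.neg_eq]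
  apply le_antisymm <;> refine iSup₂_le fun k hk => ?_
  · simpa using le_iSup₂ (f := fun k (_ : k ∈ spectrum 𝕜 a) => (‖k‖₊ : ℝ≥0∞)) (-k) hk
  · simpa using le_iSup₂ (f := fun k (_ : k ∈ -spectrum 𝕜 a) => (‖k‖₊ : ℝ≥0∞)) (-k)
      (by simpa using hk)

theorem one_mem_of_tendsto_one_sub_pow {A S : Type*} [Ring A] [TopologicalSpace A]
    [IsTopologicalAddGroup A] [SetLike S A] [NonUnitalSubringClass S A] {N : S}
    (hN : IsClosed (N : Set A)) {u : A} (hu : u ∈ N)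
    (h : Tendsto (fun n => (1 - u) ^ n) atTop (𝓝 0)) : (1 : A) ∈ N := by
  have hpow (n : ℕ) : (1 - u) ^ n - 1 ∈ N := by
    induction n with
    | zero => simp [zero_mem]
    | succ n ih =>
      rw [pow_succ, show (1 - u) ^ n * (1 - u) - 1 = ((1 - u) ^ n - 1) - ((1 - u) ^ n - 1) * u - u
        by noncomm_ring]
      exact sub_mem (sub_mem ih (mul_mem ih hu)) hu
  have hlim : Tendsto (fun n => -((1 - u) ^ n - 1)) atTop (𝓝 1) := by
    simpa using (h.sub_const 1).neg
  exact hN.mem_of_tendsto hlim (Eventually.of_forall fun n => neg_mem (hpow n))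

theorem tsum_choose_one_smul_pow {A : Type*} [Ring A] [Algebra ℂ A] [TopologicalSpace A]
    (t : A) : ∑' n, Ring.choose (1 : ℂ) n • t ^ n = 1 + t := by
  have hchoose (n : ℕ) : Ring.choose (1 : ℂ) n = (Nat.choose 1 n : ℂ) := by
    simpa using Ring.choose_natCast (R := ℂ) 1 n
  rw [tsum_eq_sum (s := Finset.range 2) fun n hn => by
    rw [hchoose, Nat.choose_eq_zero_of_lt (by simp at hn; omega), Nat.cast_zero, zero_smul]]
  simp [Finset.sum_range_succ, hchoose]

theorem Complex.re_cpow_half_pos {z : ℂ} (hz : 0 < z.re) : 0 < (z ^ (1 / 2 : ℂ)).re := by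
  have hz0 : z ≠ 0 := fun h => by simp [h] at hz
  have harg : |z.arg| < Real.pi / 2 := Complex.abs_arg_lt_pi_div_two_iff.mpr (Or.inl hz)
  rw [Complex.cpow_def_of_ne_zero hz0, Complex.exp_re]
  refine mul_pos (Real.exp_pos _) (Real.cos_pos_of_mem_Ioo ?_)
  have : (Complex.log z * (1 / 2)).im = z.arg / 2 := by simp [Complex.log_im, div_eq_mul_inv]
  rw [this]
  constructor <;> linarith [abs_lt.mp harg, Real.pi_pos]

theorem hasSum_choose_mul_pow (a : ℂ) {w : ℂ} (hw : ‖w‖ < 1) :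
    HasSum (fun n => Ring.choose a n * w ^ n) ((1 + w) ^ a) := by
  have := Complex.one_add_cpow_hasFPowerSeriesOnBall_zero (a := a).hasSum (y := w) <| by
    rw [mem_eball, edist_zero_right, ← ofReal_norm]
    exact ENNReal.ofReal_lt_one.mpr hw
  simpa [binomialSeries, mul_comm] using this

section BanachAlgebra

open Subalgebra

variable {A : Type*} [NormedRing A] [NormedAlgebra ℂ A] [CompleteSpace A]

instance (s : Set A) : CompleteSpace (centralizer ℂ s) :=
  (Set.isClosed_centralizer s).completeSpace_coe

theorem exists_algHom_centralizer_centralizer_apply_eq {s : Set A}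
    (hs : ∀ a ∈ s, ∀ b ∈ s, a * b = b * a) (a : centralizer ℂ (centralizer ℂ s : Set A))
    {μ : ℂ} (hμ : μ ∈ spectrum ℂ (a : A)) :
    ∃ φ : centralizer ℂ (centralizer ℂ s : Set A) →ₐ[ℂ] ℂ, φ a = μ := by
  let _ : NormedCommRing (centralizer ℂ (centralizer ℂ s : Set A)) :=
    { (inferInstance : NormedRing _) with
      mul_comm := fun b c => Subtype.ext <|
        Set.centralizer_centralizer_comm_of_comm hs _ b.2 _ c.2 }
  rw [← spectrum_centralizer_eq] at hμ
  obtain ⟨φ, hφ⟩ := WeakDual.CharacterSpace.mem_spectrum_iff_exists.mp hμ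
  exact ⟨WeakDual.CharacterSpace.equivAlgHom φ, hφ⟩

theorem spectrum_add_subset_of_commute {a b : A} (h : Commute a b) :
    spectrum ℂ (a + b) ⊆ spectrum ℂ a + spectrum ℂ b := by
  intro μ hμ
  have hs : ∀ c ∈ ({a, b} : Set A), ∀ d ∈ ({a, b} : Set A), c * d = d * c := by
    rintro _ (rfl | rfl) _ (rfl | rfl) <;> first | rfl | exact h.eq | exact h.eq.symm
  have hmem : ∀ c ∈ ({a, b} : Set A), c ∈ centralizer ℂ (centralizer ℂ {a, b} : Set A) :=
    fun c hc => Set.subset_centralizer_centralizer hc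
  let a' : centralizer ℂ (centralizer ℂ {a, b} : Set A) := ⟨a, hmem a (by simp)⟩
  let b' : centralizer ℂ (centralizer ℂ {a, b} : Set A) := ⟨b, hmem b (by simp)⟩
  obtain ⟨φ, rfl⟩ := exists_algHom_centralizer_centralizer_apply_eq hs (a' + b') hμ
  rw [map_add]
  exact Set.add_mem_add (spectrum_centralizer_eq a' ▸ AlgHom.apply_mem_spectrum φ a')
    (spectrum_centralizer_eq b' ▸ AlgHom.apply_mem_spectrum φ b')

theorem exists_hasSum_of_mem_spectrum_tsum {c : ℕ → ℂ} {t : A}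
    (h : Summable fun n => c n • t ^ n) {μ : ℂ} (hμ : μ ∈ spectrum ℂ (∑' n, c n • t ^ n)) :
    ∃ w ∈ spectrum ℂ t, HasSum (fun n => c n * w ^ n) μ := by
  set D := centralizer ℂ (centralizer ℂ {t} : Set A)
  have ht : t ∈ D := Set.subset_centralizer_centralizer rfl
  have hterm : ∀ n, c n • t ^ n ∈ D := fun n => D.smul_mem (pow_mem ht n) (c n)
  have hS : ∑' n, c n • t ^ n ∈ D := tsum_mem (Set.isClosed_centralizer _) hterm
  have hsum : HasSum (fun n => (⟨c n • t ^ n, hterm n⟩ : D)) ⟨_, hS⟩ :=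
    (IsInducing.subtypeVal.hasSum_iff (g := D.val) _ _).mp h.hasSum
  obtain ⟨φ, hφ⟩ := exists_algHom_centralizer_centralizer_apply_eq (s := {t}) (by simp) ⟨_, hS⟩ hμ
  refine ⟨φ ⟨t, ht⟩, spectrum_centralizer_eq (⟨t, ht⟩ : D) ▸ AlgHom.apply_mem_spectrum φ _, ?_⟩
  rw [← hφ]
  convert hsum.map φ (map_continuous φ) using 2 with n
  show _ = φ (c n • (⟨t, ht⟩ : D) ^ n)
  rw [map_smul, map_pow, smul_eq_mul]

theorem eventually_norm_pow_le_of_spectralRadius_lt {t : A} {r : ℝ≥0}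
    (h : spectralRadius ℂ t < r) : ∀ᶠ n in atTop, ‖t ^ n‖ ≤ r ^ n := by
  filter_upwards [(spectrum.gelfand_formula t).eventually_lt_const h, eventually_ge_atTop 1]
    with n hn hn1
  have : (‖t ^ n‖₊ : ℝ≥0∞) ≤ (r : ℝ≥0∞) ^ n :=
    calc (‖t ^ n‖₊ : ℝ≥0∞) = ((‖t ^ n‖₊ : ℝ≥0∞) ^ (1 / n : ℝ)) ^ n := by
          rw [← ENNReal.rpow_natCast, ← ENNReal.rpow_mul, one_div_mul_cancel (by positivity),
            ENNReal.rpow_one]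
      _ ≤ (r : ℝ≥0∞) ^ n := by gcongr
  exact_mod_cast this

theorem tendsto_pow_atTop_nhds_zero_of_spectralRadius_lt_one {a : A}
    (h : spectralRadius ℂ a < 1) : Tendsto (a ^ ·) atTop (𝓝 0) := by
  obtain ⟨r, har, hr1⟩ := ENNReal.lt_iff_exists_nnreal_btwn.mp h
  exact squeeze_zero_norm' (eventually_norm_pow_le_of_spectralRadius_lt har)
    (tendsto_pow_atTop_nhds_zero_of_lt_one r.2 (by exact_mod_cast hr1))

theorem summable_norm_choose_smul_pow (a : ℂ) {t : A} (ht : spectralRadius ℂ t < 1) :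
    Summable fun n => ‖Ring.choose a n • t ^ n‖ := by
  obtain ⟨r, htr, hr1⟩ := ENNReal.lt_iff_exists_nnreal_btwn.mp ht
  have hr : (r : ℝ≥0∞) < (binomialSeries ℂ a).radius :=
    hr1.trans_le binomialSeries_radius_ge_one
  refine Summable.of_norm_bounded_eventually_nat
    ((binomialSeries ℂ a).summable_norm_mul_pow hr) ?_
  filter_upwards [eventually_norm_pow_le_of_spectralRadius_lt htr] with n hn
  rw [norm_norm, binomialSeries, FormalMultilinearSeries.ofScalars_norm]
  exact (norm_smul_le _ _).trans (by gcongr)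

theorem tsum_choose_smul_pow_mul (a b : ℂ) {t : A} (ht : spectralRadius ℂ t < 1) :
    (∑' n, Ring.choose a n • t ^ n) * (∑' n, Ring.choose b n • t ^ n) =
      ∑' n, Ring.choose (a + b) n • t ^ n := by
  rw [tsum_mul_tsum_eq_tsum_sum_antidiagonal_of_summable_norm
    (summable_norm_choose_smul_pow a ht) (summable_norm_choose_smul_pow b ht)]
  refine tsum_congr fun n => ?_
  rw [Ring.add_choose_eq n (Commute.all a b), Finset.sum_smul]
  refine Finset.sum_congr rfl fun kl hkl => ?_
  rw [smul_mul_smul_comm, ← pow_add, Finset.HasAntidiagonal.mem_antidiagonal.mp hkl]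

theorem exists_sqrt_one_add_of_spectralRadius_lt_one {t : A} (ht : spectralRadius ℂ t < 1) :
    ∃ s : A, s ^ 2 = 1 + t ∧ s ∈ Algebra.elemental ℂ t ∧ ∀ μ ∈ spectrum ℂ s, 0 < μ.re := by
  have hsum := (summable_norm_choose_smul_pow (1 / 2) ht).of_norm
  refine ⟨∑' n, Ring.choose (1 / 2 : ℂ) n • t ^ n, ?_, ?_, fun μ hμ => ?_⟩
  · rw [sq, tsum_choose_smul_pow_mul _ _ ht, add_halves, tsum_choose_one_smul_pow]
  · exact tsum_mem (Algebra.elemental.isClosed ℂ t) fun n =>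
      Subalgebra.smul_mem _ (pow_mem (Algebra.elemental.self_mem ℂ t) n) _
  obtain ⟨w, hw, hμ⟩ := exists_hasSum_of_mem_spectrum_tsum hsum hμ
  have hw1 : ‖w‖ < 1 := by
    have := (le_iSup₂ (f := fun k (_ : k ∈ spectrum ℂ t) => (‖k‖₊ : ℝ≥0∞)) w hw).trans_lt ht
    exact_mod_cast this
  rw [hμ.unique (hasSum_choose_mul_pow _ hw1)]
  refine Complex.re_cpow_half_pos ?_
  rw [Complex.add_re, Complex.one_re]
  linarith [(abs_le.mp (Complex.abs_re_le_norm w)).1]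

theorem spectralRadius_inv_smul_sub_one_lt_one {x : A}
    (hx : ∀ z ∈ spectrum ℂ x, 0 < z.re ∧ z.im = 0) {c : ℝ} (hc0 : 0 < c)
    (hc : spectrum ℂ x ⊆ closedBall 0 c) :
    spectralRadius ℂ ((c⁻¹ : ℂ) • x - 1) < 1 := by
  rcases (spectrum ℂ ((c⁻¹ : ℂ) • x - 1)).eq_empty_or_nonempty with h | h
  · simp [spectralRadius, h]
  refine spectrum.spectralRadius_lt_of_forall_lt_of_nonempty h fun w hw => ?_
  rw [← map_one (algebraMap ℂ A), ← spectrum.sub_singleton_eq,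
    show (c⁻¹ : ℂ) • x = (Units.mk0 (c⁻¹ : ℂ) (by simpa using hc0.ne')) • x from rfl,
    spectrum.unit_smul_eq_smul] at hw
  obtain ⟨_, ⟨μ, hμ, rfl⟩, _, rfl, rfl⟩ := hw
  obtain ⟨hre, him⟩ := hx μ hμ
  have hle : μ.re ≤ c := (Complex.re_le_norm μ).trans (mem_closedBall_zero_iff.mp (hc hμ))
  have hμ : μ = (μ.re : ℂ) := Complex.ext rfl (by simp [him])
  rw [← NNReal.coe_lt_coe, coe_nnnorm, NNReal.coe_one]
  change ‖(c⁻¹ : ℂ) * μ - 1‖ < 1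
  rw [hμ, ← Complex.ofReal_inv, ← Complex.ofReal_mul, ← Complex.ofReal_one, ← Complex.ofReal_sub,
    Complex.norm_real, Real.norm_eq_abs, abs_lt]
  have : c⁻¹ * μ.re ≤ 1 := by rw [inv_mul_le_one₀ hc0]; exact hle
  constructor <;> nlinarith [mul_pos (inv_pos.mpr hc0) hre]

theorem exists_sqrt_of_spectralRadius_inv_smul_sub_one_lt_one {x : A} {c : ℝ} (hc : 0 < c)
    (h : spectralRadius ℂ ((c⁻¹ : ℂ) • x - 1) < 1) :
    ∃ y : A, y ^ 2 = x ∧ y ∈ Algebra.elemental ℂ x ∧ ∀ μ ∈ spectrum ℂ y, 0 < μ.re := by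
  obtain ⟨s, hs_sq, hs_mem, hs_re⟩ := exists_sqrt_one_add_of_spectralRadius_lt_one h
  have hc' : (√c : ℂ) ≠ 0 := Complex.ofReal_ne_zero.mpr (Real.sqrt_ne_zero'.mpr hc)
  refine ⟨(√c : ℂ) • s, ?_, ?_, fun μ hμ => ?_⟩
  · rw [smul_pow, hs_sq, add_sub_cancel, ← Complex.ofReal_pow, Real.sq_sqrt hc.le,
      smul_inv_smul₀ (by simpa using hc.ne')]
  · have : Algebra.elemental ℂ ((c⁻¹ : ℂ) • x - 1) ≤ Algebra.elemental ℂ x :=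
      Algebra.elemental.le_of_mem (Algebra.elemental.isClosed ℂ x)
        (sub_mem (Subalgebra.smul_mem _ (Algebra.elemental.self_mem ℂ x) _) (one_mem _))
    exact Subalgebra.smul_mem _ (this hs_mem) _
  have := hs_re ((√c : ℂ)⁻¹ * μ) <| by
    rw [← spectrum.smul_mem_smul_iff (r := Units.mk0 _ hc')]
    simpa [mul_inv_cancel_left₀ hc'] using hμ
  rw [← Complex.ofReal_inv, Complex.re_ofReal_mul] at this
  exact pos_of_mul_pos_right this (by positivity)

theorem eq_of_sq_eq_sq_of_commute {y z : A} (h : Commute y z) (hsq : y ^ 2 = z ^ 2)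
    (hy : ∀ μ ∈ spectrum ℂ y, 0 < μ.re) (hz : ∀ μ ∈ spectrum ℂ z, 0 ≤ μ.re) : y = z := by
  have hunit : IsUnit (y + z) := by
    rw [← spectrum.zero_notMem_iff ℂ]
    intro h0
    obtain ⟨α, hα, β, hβ, hαβ⟩ := spectrum_add_subset_of_commute h h0
    have := congrArg Complex.re hαβ
    rw [Complex.add_re, Complex.zero_re] at this
    linarith [hy α hα, hz β hβ]
  have : (y - z) * (y + z) = 0 := by
    rw [← h.mul_self_sub_mul_self_eq', ← sq, ← sq, hsq, sub_self]
  exact sub_eq_zero.mp (hunit.mul_left_eq_zero.mp this)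

end BanachAlgebra

/-- An element of a unital complex Banach algebra whose spectrum lies in `(0, ∞)` has a
unique square root with spectrum in `[0, ∞)`; this square root has spectrum in `(0, ∞)`
and lies in the closure of the (non-unital) subalgebra generated by `x`. -/
theorem exists_unique_sqrt_of_spectrum_pos
    {A : Type*} [NormedRing A] [NormedAlgebra ℂ A] [CompleteSpace A]
    (x : A) (hx : ∀ z ∈ spectrum ℂ x, 0 < z.re ∧ z.im = 0) :
    ∃ y : A, y ^ 2 = x ∧ (∀ z ∈ spectrum ℂ y, 0 < z.re ∧ z.im = 0) ∧
      y ∈ closure (NonUnitalAlgebra.adjoin ℂ {x} : Set A) ∧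
      ∀ z : A, z ^ 2 = x → (∀ w ∈ spectrum ℂ z, 0 ≤ w.re ∧ w.im = 0) → z = y := by
  obtain ⟨c, hc0, hc⟩ := (spectrum.isBounded (𝕜 := ℂ) x).subset_closedBall_lt 0 0
  have ht := spectralRadius_inv_smul_sub_one_lt_one hx hc0 hc
  obtain ⟨y, hy_sq, hy_mem, hy_re⟩ :=
    exists_sqrt_of_spectralRadius_inv_smul_sub_one_lt_one hc0 ht
  refine ⟨y, hy_sq, fun μ hμ => ⟨hy_re μ hμ, ?_⟩, ?_, fun z hz_sq hz => ?_⟩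
  · have him := (hx _ (hy_sq ▸ spectrum.pow_mem_pow y 2 hμ)).2
    rw [sq, Complex.mul_im] at him
    have : μ.im * (2 * μ.re) = 0 := by linarith
    exact (mul_eq_zero.mp this).resolve_right (by linarith [hy_re μ hμ])
  · have h1 : (1 : A) ∈ NonUnitalAlgebra.elemental ℂ x :=
      one_mem_of_tendsto_one_sub_pow (NonUnitalAlgebra.elemental.isClosed ℂ x)
        (SMulMemClass.smul_mem (c⁻¹ : ℂ) (NonUnitalAlgebra.elemental.self_mem ℂ x))
        (by simpa only [neg_sub] using
          tendsto_pow_atTop_nhds_zero_of_spectralRadius_lt_one ((spectralRadius_neg _).trans_lt ht))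
    exact Algebra.elemental.le_of_mem (s := (NonUnitalAlgebra.elemental ℂ x).toSubalgebra h1)
      (NonUnitalAlgebra.elemental.isClosed ℂ x) (NonUnitalAlgebra.elemental.self_mem ℂ x) hy_mem
  · have hzx : Commute z x := hz_sq ▸ Commute.self_pow z 2
    have hzy : z * y = y * z := Algebra.elemental.le_centralizer_centralizer ℂ x hy_mem z
      (by rintro _ rfl; exact hzx.eq.symm)
    exact (eq_of_sq_eq_sq_of_commute hzy.symm (hy_sq.trans hz_sq.symm) hy_re
      fun w hw => (hz w hw).1).symm
end

section
/- Let A be a unital complex Banach algebra and let B be a closed subalgebra of A containing the unit of A. Let b ∈ B be such that the spectrum sp_A(b) does not separate the complex plane (i.e. ℂ \ sp_A(b) is connected). Then sp_B(b) = sp_A(b). -/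
/-- If `B` is a closed unital subalgebra of a unital complex Banach algebra `A` and `b ∈ B`
has a spectrum (relative to `A`) which does not separate the complex plane, then the
spectra of `b` relative to `B` and relative to `A` coincide. -/
theorem spectrum_subalgebra_eq_of_compl_connected
    {A : Type*} [NormedRing A] [NormedAlgebra ℂ A] [CompleteSpace A]
    (B : Subalgebra ℂ A) (hB : IsClosed (B : Set A)) (b : B)
    (hconn : IsConnected ((spectrum ℂ (b : A))ᶜ)) :
    spectrum ℂ b = spectrum ℂ (b : A) :=
  Subalgebra.spectrum_eq_of_isPreconnected_compl (hS := hB) B b hconn.isPreconnected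
end

section
/- A unital Banach *-algebra A is Hermitian if and only if the spectrum of every unitary element of A is contained in the unit circle {z ∈ ℂ : |z| = 1}. -/
/-!
If `A` is Hermitian and `u` is unitary, then for `z ∈ sp(u)` the number `z + z⁻¹` lies in the
spectrum of the self-adjoint element `u + u*`, so it is real; applied to the unitary `i u` this
also makes `i (z - z⁻¹)` real, and together these say `conj z = z⁻¹`, i.e. `|z| = 1`.

Conversely, let `a` be self-adjoint and pick `z ∉ sp(a)` off the real axis. The Cayley
transform `(z - a) (conj z - a)⁻¹` is unitary, and it has `(r - z) / (r - conj z)` in its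
spectrum for every `r ∈ sp(a)`. That this has modulus one means `r` is equidistant from `z` and
`conj z`, so `r` is real.
-/

open Complex ComplexConjugate

section Spectrum

variable {𝕜 A : Type*} [Field 𝕜] [Ring A] [Algebra 𝕜 A]

lemma spectrum.add_inv_mem_add_inv {u : Aˣ} {r : 𝕜} (hr : r ∈ spectrum 𝕜 (u : A)) :
    r + r⁻¹ ∈ spectrum 𝕜 ((u : A) + ↑u⁻¹) := by
  have hr0 : r ≠ 0 := fun h => u.zero_notMem_spectrum 𝕜 (h ▸ hr)
  have hfactor : algebraMap 𝕜 A (r + r⁻¹) - ((u : A) + ↑u⁻¹) =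
      (algebraMap 𝕜 A r - u) * (1 - r⁻¹ • (↑u⁻¹ : A)) := by
    simp only [mul_sub, sub_mul, mul_one, mul_smul_comm, Units.mul_inv, one_mul,
      Algebra.algebraMap_eq_smul_one, smul_mul_assoc, add_smul]
    rw [smul_sub, smul_smul, inv_mul_cancel₀ hr0, one_smul]
    abel
  have hcomm : Commute (algebraMap 𝕜 A r - u) (1 - r⁻¹ • (↑u⁻¹ : A)) :=
    (Algebra.commute_algebraMap_left r _).sub_left
      ((Commute.one_right _).sub_right ((Commute.units_inv_right (Commute.refl _)).smul_right _))
  rw [spectrum.mem_iff, hfactor, hcomm.isUnit_mul_iff]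
  exact fun h => spectrum.mem_iff.mp hr h.1

lemma spectrum.div_sub_mem_sub_mul_inv {a : A} {z w r : 𝕜} (hzw : z ≠ w) (q : Aˣ)
    (hq : (q : A) = algebraMap 𝕜 A w - a) (hr : r ∈ spectrum 𝕜 a) :
    (r - z) / (r - w) ∈ spectrum 𝕜 ((algebraMap 𝕜 A z - a) * ↑q⁻¹) := by
  have hrw : r - w ≠ 0 := by
    intro h
    rw [sub_eq_zero.mp h, spectrum.mem_iff, ← hq] at hr
    exact hr q.isUnit
  set μ := (r - z) / (r - w)
  have hμ : μ - 1 ≠ 0 := by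
    rw [sub_ne_zero, Ne, div_eq_one_iff_eq hrw, sub_right_inj]
    exact hzw
  have hmoebius : (μ - 1) * r = μ * w - z := by
    simp only [μ]; field_simp; ring
  have hfactor : algebraMap 𝕜 A (μ - 1) * (algebraMap 𝕜 A r - a) =
      (algebraMap 𝕜 A μ - (algebraMap 𝕜 A z - a) * ↑q⁻¹) * q := by
    rw [sub_mul, mul_assoc, q.inv_mul, mul_one, hq]
    simp only [Algebra.algebraMap_eq_smul_one, smul_mul_assoc, one_mul]
    linear_combination (norm := module) hmoebius • (1 : A)
  refine spectrum.mem_iff.mpr fun hunit => spectrum.mem_iff.mp hr ?_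
  rw [← ((Ne.isUnit hμ).map (algebraMap 𝕜 A)).mul_left_iff, hfactor]
  exact hunit.mul q.isUnit

end Spectrum

namespace Complex

lemma norm_eq_one_of_im_add_inv_eq_zero {z : ℂ} (hz : z ≠ 0) (him : (z + z⁻¹).im = 0)
    (him' : (I * z + (I * z)⁻¹).im = 0) : ‖z‖ = 1 := by
  have hconj : conj z = z⁻¹ := by
    apply Complex.ext <;> simp at him him' ⊢ <;> linarith
  have hnormSq : (normSq z : ℂ) = 1 := by rw [← mul_conj, hconj, mul_inv_cancel₀ hz]
  rw [norm_def, ofReal_eq_one.mp hnormSq, Real.sqrt_one]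

lemma im_eq_zero_of_norm_sub_eq_norm_sub_conj {r z : ℂ} (hz : z.im ≠ 0)
    (h : ‖r - z‖ = ‖r - conj z‖) : r.im = 0 := by
  have hsq : normSq (r - z) = normSq (r - conj z) := by
    rw [normSq_eq_norm_sq, normSq_eq_norm_sq, h]
  simp only [normSq_apply, sub_re, sub_im, conj_re, conj_im] at hsq
  have : r.im * z.im = 0 := by linear_combination (-1 / 4 : ℝ) * hsq
  exact (mul_eq_zero.mp this).resolve_right hz

end Complex

lemma Units.mul_inv_star_mem_unitary {R : Type*} [Monoid R] [StarMul R] (p : Rˣ)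
    (hp : IsStarNormal (p : R)) : (p * ↑(star p)⁻¹ : R) ∈ unitary R := by
  rw [Units.mul_inv_mem_unitary, star_star]
  exact Units.ext hp.star_comm_self

section StarAlgebra

variable {A : Type*} [Ring A] [StarRing A] [Algebra ℂ A]

lemma im_add_inv_eq_zero_of_mem_spectrum_of_mem_unitary
    (hA : ∀ a : A, IsSelfAdjoint a → ∀ z ∈ spectrum ℂ a, z.im = 0)
    {u : A} (hu : u ∈ unitary A) {z : ℂ} (hz : z ∈ spectrum ℂ u) : (z + z⁻¹).im = 0 := by
  have hz' := spectrum.add_inv_mem_add_inv (u := Unitary.toUnits ⟨u, hu⟩) hz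
  simp only [Unitary.val_toUnits_apply, Unitary.val_inv_toUnits_apply] at hz'
  exact hA _ (IsSelfAdjoint.add_star_self u) _ hz'

variable [StarModule ℂ A]

lemma norm_eq_one_of_mem_spectrum_of_mem_unitary
    (hA : ∀ a : A, IsSelfAdjoint a → ∀ z ∈ spectrum ℂ a, z.im = 0)
    {u : A} (hu : u ∈ unitary A) {z : ℂ} (hz : z ∈ spectrum ℂ u) : ‖z‖ = 1 := by
  have hz0 : z ≠ 0 := fun h =>
    spectrum.zero_notMem ℂ (Unitary.isUnit_coe (U := ⟨u, hu⟩)) (h ▸ hz)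
  have hIu : I • u ∈ unitary A :=
    Unitary.smul_mem_of_mem (Unitary.mem_iff.mpr ⟨by simp, by simp⟩) hu
  have hIz : I * z ∈ spectrum ℂ (I • u) := by
    simpa using spectrum.smul_mem_smul_iff (r := Units.mk0 I I_ne_zero) |>.mpr hz
  exact norm_eq_one_of_im_add_inv_eq_zero hz0
    (im_add_inv_eq_zero_of_mem_spectrum_of_mem_unitary hA hu hz)
    (im_add_inv_eq_zero_of_mem_spectrum_of_mem_unitary hA hIu hIz)

lemma IsSelfAdjoint.star_algebraMap_sub {a : A} (ha : IsSelfAdjoint a) (z : ℂ) :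
    star (algebraMap ℂ A z - a) = algebraMap ℂ A (conj z) - a := by
  rw [star_sub, ha.star_eq, ← algebraMap_star_comm, Complex.star_def]

lemma IsSelfAdjoint.isStarNormal_algebraMap_sub {a : A} (ha : IsSelfAdjoint a) (z : ℂ) :
    IsStarNormal (algebraMap ℂ A z - a) := by
  rw [isStarNormal_iff, ha.star_algebraMap_sub]
  exact (Algebra.commute_algebraMap_left _ _).sub_left
    ((Algebra.commute_algebraMap_right _ _).sub_right (Commute.refl a))

lemma im_eq_zero_of_mem_spectrum_of_isSelfAdjoint
    (hA : ∀ u : A, u ∈ unitary A → ∀ z ∈ spectrum ℂ u, ‖z‖ = 1)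
    {a : A} (ha : IsSelfAdjoint a) {z : ℂ} (hz : z.im ≠ 0) (hza : z ∉ spectrum ℂ a)
    {r : ℂ} (hr : r ∈ spectrum ℂ a) : r.im = 0 := by
  set p := (spectrum.notMem_iff.mp hza).unit
  have hp : (p : A) = algebraMap ℂ A z - a := IsUnit.unit_spec _
  have hq : (↑(star p) : A) = algebraMap ℂ A (conj z) - a := by
    rw [Units.coe_star, hp, ha.star_algebraMap_sub]
  have hu : (p * ↑(star p)⁻¹ : A) ∈ unitary A :=
    p.mul_inv_star_mem_unitary (hp ▸ ha.isStarNormal_algebraMap_sub z)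
  have hzz : z ≠ conj z := fun h => hz (conj_eq_iff_im.mp h.symm)
  have hμ := spectrum.div_sub_mem_sub_mul_inv hzz (star p) hq hr
  rw [← hp] at hμ
  have hnorm := hA _ hu _ hμ
  rw [norm_div] at hnorm
  exact im_eq_zero_of_norm_sub_eq_norm_sub_conj hz (eq_of_div_eq_one hnorm)

end StarAlgebra

lemma spectrum.exists_im_ne_zero_notMem {A : Type*} [NormedRing A] [NormedAlgebra ℂ A]
    [CompleteSpace A] (a : A) : ∃ z : ℂ, z.im ≠ 0 ∧ z ∉ spectrum ℂ a := by
  have ht : 0 < ‖a‖ * ‖(1 : A)‖ + 1 := by positivity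
  refine ⟨(‖a‖ * ‖(1 : A)‖ + 1 : ℝ) * I, by rw [mul_I_im, ofReal_re]; exact ht.ne',
    fun h => ?_⟩
  have hle := spectrum.norm_le_norm_mul_of_mem h
  rw [norm_mul, norm_I, mul_one, norm_real, Real.norm_of_nonneg ht.le] at hle
  linarith

/-- A unital Banach `*`-algebra is Hermitian (every self-adjoint element has real spectrum)
if and only if the spectrum of every unitary element is contained in the unit circle. -/
theorem hermitian_iff_spectrum_unitary_subset_circle
    {A : Type*} [NormedRing A] [NormedAlgebra ℂ A] [CompleteSpace A]
    [StarRing A] [StarModule ℂ A] :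
    (∀ a : A, IsSelfAdjoint a → ∀ z ∈ spectrum ℂ a, z.im = 0) ↔
      (∀ u : A, u ∈ unitary A → ∀ z ∈ spectrum ℂ u, ‖z‖ = 1) := by
  refine ⟨fun hA u hu z hz => norm_eq_one_of_mem_spectrum_of_mem_unitary hA hu hz,
    fun hA a ha r hr => ?_⟩
  obtain ⟨z, hz, hza⟩ := spectrum.exists_im_ne_zero_notMem a
  exact im_eq_zero_of_mem_spectrum_of_isSelfAdjoint hA ha hz hza hr
end

section
/- Let A be a unital Banach *-algebra and let B be a norm-closed *-subalgebra of A containing the unit of A. Assume B is Hermitian (every Hermitian element of B has real spectrum relative to B). Then for every b ∈ B one has sp_B(b) = sp_A(b). -/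
/-!
Spectral permanence fails only through "holes": for a closed unital subalgebra `S`, the
boundary of `sp_S(x)` always lies in `sp_A(x)`. A self-adjoint element of `S` has real spectrum, which
has empty interior in `ℂ`, so it is all boundary and `sp_S(h) = sp_A(h)`. Hence an element of
`S` invertible in `A` has `a* a` and `a a*` invertible in `S`, which gives `a` a left and a right
inverse in `S`.
-/

open Set

lemma Complex.interior_eq_empty_of_forall_im_eq_zero {s : Set ℂ} (hs : ∀ z ∈ s, z.im = 0) :
    interior s = ∅ :=
  subset_empty_iff.mp <| calc
    interior s ⊆ interior (im ⁻¹' {0}) := interior_mono hs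
    _ = ∅ := by rw [interior_preimage_im, interior_singleton, preimage_empty]

lemma isUnit_of_isUnit_mul_of_isUnit_mul {M : Type*} [Monoid M] {a b c : M}
    (hba : IsUnit (b * a)) (hac : IsUnit (a * c)) : IsUnit a :=
  isUnit_iff_exists_and_exists.mpr
    ⟨⟨c * hac.unit⁻¹, by rw [← mul_assoc]; exact hac.mul_val_inv⟩,
      ⟨hba.unit⁻¹ * b, by rw [mul_assoc]; exact hba.val_inv_mul⟩⟩

lemma Subalgebra.spectrum_eq_of_interior_eq_empty {𝕜 A SA : Type*} [NormedField 𝕜]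
    [NormedRing A] [NormedAlgebra 𝕜 A] [CompleteSpace A] [SetLike SA A] [SubringClass SA A]
    [SMulMemClass SA 𝕜 A] (S : SA) [hS : IsClosed (S : Set A)] (x : S)
    (h : interior (spectrum 𝕜 x) = ∅) : spectrum 𝕜 x = spectrum 𝕜 (x : A) := by
  have : CompleteSpace S := hS.completeSpace_coe
  refine subset_antisymm ?_ (spectrum.subset_subalgebra x)
  simpa only [frontier, h, (spectrum.isClosed x).closure_eq, sdiff_empty]
    using Subalgebra.frontier_spectrum S x

lemma StarSubalgebra.coe_isUnit_of_hermitian {A : Type*} [NormedRing A] [NormedAlgebra ℂ A]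
    [CompleteSpace A] [StarRing A] [StarModule ℂ A] (S : StarSubalgebra ℂ A)
    [IsClosed (S : Set A)]
    (hHerm : ∀ b : S, IsSelfAdjoint b → ∀ z ∈ spectrum ℂ b, z.im = 0) {a : S} :
    IsUnit (a : A) ↔ IsUnit a := by
  refine ⟨fun ha ↦ ?_, IsUnit.map S.subtype⟩
  have isUnit_of_isSelfAdjoint {h : S} (hh : IsSelfAdjoint h) (hu : IsUnit (h : A)) :
      IsUnit h := by
    have spec_eq := Subalgebra.spectrum_eq_of_interior_eq_empty S h
      (Complex.interior_eq_empty_of_forall_im_eq_zero (hHerm h hh))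
    rwa [← spectrum.zero_notMem_iff ℂ, spec_eq, spectrum.zero_notMem_iff]
  exact isUnit_of_isUnit_mul_of_isUnit_mul
    (isUnit_of_isSelfAdjoint (.star_mul_self a) (ha.star.mul ha))
    (isUnit_of_isSelfAdjoint (.mul_star_self a) (ha.mul ha.star))

/-- If `S` is a Hermitian closed unital `*`-subalgebra of a unital Banach `*`-algebra `A`,
then for every `b ∈ S` the spectrum of `b` relative to `S` equals the spectrum of `b`
relative to `A`. -/
theorem spectrum_starSubalgebra_eq_of_hermitian
    {A : Type*} [NormedRing A] [NormedAlgebra ℂ A] [CompleteSpace A]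
    [StarRing A] [StarModule ℂ A]
    (S : StarSubalgebra ℂ A) (hS : IsClosed (S : Set A))
    (hHerm : ∀ b : S, IsSelfAdjoint b → ∀ z ∈ spectrum ℂ b, z.im = 0)
    (b : S) : spectrum ℂ b = spectrum ℂ (b : A) :=
  ext fun _ ↦ not_iff_not.mpr (S.coe_isUnit_of_hermitian hHerm).symm
end

section
/- Let A be a unital Hermitian Banach *-algebra and let a, b be positive elements of A. Then the product ab is a positive element of A if and only if a and b commute. -/
/-!
If `a` and `b` are self-adjoint, `(a * b)* = b * a`, so `a * b` is self-adjoint exactly when `a`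
and `b` commute. Conversely, for commuting `a` and `b` the bicommutant of `{a, b}` is a closed
commutative subalgebra which is inverse-closed, hence computes the same spectra; Gelfand theory
there gives `sp(a * b) ⊆ sp(a) · sp(b)`, and products of nonnegative reals are nonnegative.
-/

open scoped Pointwise ComplexOrder

namespace Subalgebra

variable {R A : Type*} [CommRing R] [Ring A] [Algebra R A]

lemma isUnit_coe_centralizer_iff_s11 {s : Set A} {x : centralizer R s} :
    IsUnit (x : A) ↔ IsUnit x := by
  refine ⟨fun hx ↦ ?_, fun hx ↦ hx.map (centralizer R s).val⟩
  have hinv : (↑hx.unit⁻¹ : A) ∈ centralizer R s := fun g hg ↦ by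
    have hgx : Commute g hx.unit := by rw [hx.unit_spec]; exact x.2 g hg
    exact hgx.units_inv_right.eq
  exact ⟨⟨x, ⟨_, hinv⟩, Subtype.ext hx.mul_val_inv, Subtype.ext hx.val_inv_mul⟩, rfl⟩

lemma spectrum_centralizer (s : Set A) (x : centralizer R s) :
    spectrum R x = spectrum R (x : A) :=
  Set.ext fun _ ↦ not_iff_not.mpr isUnit_coe_centralizer_iff_s11.symm

end Subalgebra

section Commute

variable {A : Type*} [NormedRing A] [NormedAlgebra ℂ A] [CompleteSpace A] {a b : A}

theorem spectrum_mul_subset_mul_of_commute (hab : Commute a b) :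
    spectrum ℂ (a * b) ⊆ spectrum ℂ a * spectrum ℂ b := by
  set B := Subalgebra.centralizer ℂ (Set.centralizer {a, b})
  have hpair : ∀ x ∈ ({a, b} : Set A), ∀ y ∈ ({a, b} : Set A), x * y = y * x := by
    rintro x (rfl | rfl) y (rfl | rfl)
    exacts [rfl, hab.eq, hab.symm.eq, rfl]
  let _ : NormedCommRing B :=
    { (inferInstance : NormedRing B) with
      mul_comm := fun x y ↦ Subtype.ext <|
        Set.centralizer_centralizer_comm_of_comm hpair _ x.2 _ y.2 }
  have : CompleteSpace B := (Set.isClosed_centralizer _).completeSpace_coe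
  let a' : B := ⟨a, Set.subset_centralizer_centralizer (by simp)⟩
  let b' : B := ⟨b, Set.subset_centralizer_centralizer (by simp)⟩
  intro z hz
  have hz' : z ∈ spectrum ℂ (a' * b') := by rwa [Subalgebra.spectrum_centralizer (R := ℂ)]
  obtain ⟨φ, rfl⟩ := WeakDual.CharacterSpace.mem_spectrum_iff_exists.mp hz'
  rw [map_mul, ← Subalgebra.spectrum_centralizer (R := ℂ) _ a',
    ← Subalgebra.spectrum_centralizer (R := ℂ) _ b']
  exact Set.mul_mem_mul (AlgHom.apply_mem_spectrum φ a') (AlgHom.apply_mem_spectrum φ b')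

theorem spectrum_mul_nonneg_of_commute (hab : Commute a b)
    (ha : ∀ z ∈ spectrum ℂ a, 0 ≤ z) (hb : ∀ z ∈ spectrum ℂ b, 0 ≤ z) :
    ∀ z ∈ spectrum ℂ (a * b), 0 ≤ z := by
  intro z hz
  obtain ⟨x, hx, y, hy, rfl⟩ := spectrum_mul_subset_mul_of_commute hab hz
  exact mul_nonneg (ha x hx) (hb y hy)

end Commute

theorem mul_positive_iff_commute_general
    {A : Type*} [NormedRing A] [NormedAlgebra ℂ A] [CompleteSpace A]
    [StarRing A]
    (a b : A)
    (ha : IsSelfAdjoint a) (ha' : ∀ z ∈ spectrum ℂ a, 0 ≤ z.re ∧ z.im = 0)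
    (hb : IsSelfAdjoint b) (hb' : ∀ z ∈ spectrum ℂ b, 0 ≤ z.re ∧ z.im = 0) :
    (IsSelfAdjoint (a * b) ∧ ∀ z ∈ spectrum ℂ (a * b), 0 ≤ z.re ∧ z.im = 0) ↔
      a * b = b * a := by
  have nonneg_iff (z : ℂ) : 0 ≤ z ↔ 0 ≤ z.re ∧ z.im = 0 := by rw [Complex.nonneg_iff, eq_comm]
  simp only [← nonneg_iff] at ha' hb' ⊢
  exact ⟨fun h ↦ ((ha.commute_iff hb).mpr h.1).eq,
    fun hab ↦ ⟨(ha.commute_iff hb).mp hab, spectrum_mul_nonneg_of_commute hab ha' hb'⟩⟩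

/-- In a unital Hermitian Banach `*`-algebra, the product of two positive elements is
positive if and only if the two elements commute. -/
theorem mul_positive_iff_commute
    {A : Type*} [NormedRing A] [NormedAlgebra ℂ A] [CompleteSpace A]
    [StarRing A] [StarModule ℂ A]
    (hHerm : ∀ x : A, IsSelfAdjoint x → ∀ z ∈ spectrum ℂ x, z.im = 0)
    (a b : A)
    (ha : IsSelfAdjoint a) (ha' : ∀ z ∈ spectrum ℂ a, 0 ≤ z.re ∧ z.im = 0)
    (hb : IsSelfAdjoint b) (hb' : ∀ z ∈ spectrum ℂ b, 0 ≤ z.re ∧ z.im = 0) :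
    (IsSelfAdjoint (a * b) ∧ ∀ z ∈ spectrum ℂ (a * b), 0 ≤ z.re ∧ z.im = 0) ↔
      a * b = b * a :=
  mul_positive_iff_commute_general a b ha ha' hb hb'
end

section
/- Every *-algebra homomorphism from a Banach *-algebra (whose involution is not assumed continuous) to a C*-algebra is continuous. -/
/-!
On self-adjoint elements `π` is contractive: `‖π h‖` is the spectral radius of `π h` in the
C*-algebra, and the quasispectrum of `π h` lies in that of `h`. Hence `π` extends continuously
from the self-adjoint part `H` to its closure. The real-linear surjection `(h, k) ↦ h + i k` from
`closure H × closure H` onto `A` is open, so every `a` is `h + i k` with `‖h‖ + ‖k‖ ≤ C ‖a‖`.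
Approximating `h, k` by self-adjoint `hₙ, kₙ`, the defects `dₙ = a - hₙ - i kₙ` tend to `0` and
`dₙ*` converges, so the self-adjoint elements `dₙ* dₙ` tend to `0` and so do their images; the
C*-identity then forces `π dₙ → 0`. Thus `π a = y + i w` for the extended values `y, w` at `h, k`,
and `‖π a‖ ≤ ‖h‖ + ‖k‖ ≤ C ‖a‖`.
-/

open Filter Topology Complex ComplexStarModule

theorem quasispectrum.norm_le_norm_of_mem {𝕜 A : Type*} [NontriviallyNormedField 𝕜]
    [CompleteSpace 𝕜] [NonUnitalNormedRing A] [CompleteSpace A] [NormedSpace 𝕜 A]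
    [IsScalarTower 𝕜 A A] [SMulCommClass 𝕜 A A] {a : A} {k : 𝕜} (hk : k ∈ quasispectrum 𝕜 a) :
    ‖k‖ ≤ ‖a‖ := by
  rw [Unitization.quasispectrum_eq_spectrum_inr' 𝕜 𝕜,
    ← AlgEquiv.spectrum_eq (WithLp.unitizationAlgEquiv 𝕜).symm (a : Unitization 𝕜 A)] at hk
  simpa [WithLp.unitization_norm_def,
    show WithLp.ofLp (1 : WithLp 1 (Unitization 𝕜 A)) = 1 from rfl]
    using spectrum.norm_le_norm_mul_of_mem hk

theorem UniformContinuousOn.exists_tendsto_nhdsWithin {X Y : Type*} [UniformSpace X]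
    [UniformSpace Y] [CompleteSpace Y] {f : X → Y} {s : Set X} (hf : UniformContinuousOn f s)
    {x : X} (hx : x ∈ closure s) : ∃ y, Tendsto f (𝓝[s] x) (𝓝 y) := by
  have := mem_closure_iff_nhdsWithin_neBot.mp hx
  exact cauchy_map_iff_exists_tendsto.mp <|
    (cauchy_nhds.mono nhdsWithin_le_nhds).map_of_le hf inf_le_right

theorem exists_decomposition_closure_selfAdjoint_norm_le {A : Type*} [NormedAddCommGroup A]
    [NormedSpace ℂ A] [CompleteSpace A] [StarAddMonoid A] [StarModule ℂ A] :
    ∃ C : ℝ, ∀ a : A, ∃ h ∈ closure (selfAdjoint A : Set A),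
      ∃ k ∈ closure (selfAdjoint A : Set A), h + I • k = a ∧ ‖h‖ + ‖k‖ ≤ C * ‖a‖ := by
  let K := (selfAdjoint.submodule ℝ A).topologicalClosure
  have : CompleteSpace K :=
    (selfAdjoint.submodule ℝ A).isClosed_topologicalClosure.completeSpace_coe
  let Ψ : K × K →L[ℝ] A := K.subtypeL.coprod (I • K.subtypeL)
  have hΨ_surj : Function.Surjective Ψ := fun a =>
    ⟨(⟨ℜ a, Submodule.le_topologicalClosure _ (ℜ a).2⟩,
      ⟨ℑ a, Submodule.le_topologicalClosure _ (ℑ a).2⟩), realPart_add_I_smul_imaginaryPart a⟩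
  obtain ⟨C, -, hC⟩ := Ψ.exists_preimage_norm_le hΨ_surj
  refine ⟨2 * C, fun a => ?_⟩
  obtain ⟨p, rfl, hp⟩ := hC a
  refine ⟨p.1, p.1.2, p.2, p.2.2, rfl, ?_⟩
  calc ‖(p.1 : A)‖ + ‖(p.2 : A)‖ ≤ ‖p‖ + ‖p‖ := add_le_add (norm_fst_le p) (norm_snd_le p)
    _ ≤ 2 * C * ‖Ψ p‖ := by linarith

namespace NonUnitalStarAlgHom

variable {A B : Type*} [NonUnitalNormedRing A] [CompleteSpace A] [NormedSpace ℂ A]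
  [IsScalarTower ℂ A A] [SMulCommClass ℂ A A] [StarRing A] [NonUnitalCStarAlgebra B]
  (π : A →⋆ₙₐ[ℂ] B)

theorem norm_apply_le_of_isSelfAdjoint {h : A} (hh : IsSelfAdjoint h) : ‖π h‖ ≤ ‖h‖ := by
  obtain ⟨k, hk, hk_norm⟩ :=
    (NonUnitalIsometricContinuousFunctionalCalculus.isGreatest_norm_quasispectrum (𝕜 := ℂ)
      (π h) (hh.map π).isStarNormal).1
  rw [← hk_norm]
  exact quasispectrum.norm_le_norm_of_mem (NonUnitalAlgHom.quasispectrum_apply_subset π h hk)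

theorem lipschitzOnWith_selfAdjoint : LipschitzOnWith 1 π (selfAdjoint A : Set A) :=
  LipschitzOnWith.of_dist_le_mul fun x hx y hy => by
    simpa [dist_eq_norm, ← map_sub] using π.norm_apply_le_of_isSelfAdjoint (hx.sub hy)

theorem exists_tendsto_nhdsWithin_selfAdjoint {h : A}
    (hh : h ∈ closure (selfAdjoint A : Set A)) :
    ∃ y, Tendsto π (𝓝[selfAdjoint A] h) (𝓝 y) ∧ ‖y‖ ≤ ‖h‖ := by
  have := mem_closure_iff_nhdsWithin_neBot.mp hh
  obtain ⟨y, hy⟩ :=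
    π.lipschitzOnWith_selfAdjoint.uniformContinuousOn.exists_tendsto_nhdsWithin hh
  refine ⟨y, hy, le_of_tendsto_of_tendsto hy.norm continuous_norm.continuousWithinAt ?_⟩
  filter_upwards [self_mem_nhdsWithin] with x hx
  exact π.norm_apply_le_of_isSelfAdjoint hx

theorem eq_zero_of_tendsto_of_tendsto_star {ι : Type*} {l : Filter ι} [l.NeBot] {d : ι → A}
    {s : A} {z : B}
    (hd : Tendsto d l (𝓝 0)) (hds : Tendsto (fun i => star (d i)) l (𝓝 s))
    (hπd : Tendsto (fun i => π (d i)) l (𝓝 z)) : z = 0 := by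
  have h0 : Tendsto (fun i => star (d i) * d i) l (𝓝 0) := by simpa using hds.mul hd
  have hπ0 : Tendsto (fun i => π (star (d i) * d i)) l (𝓝 0) :=
    squeeze_zero_norm (fun i => π.norm_apply_le_of_isSelfAdjoint (.star_mul_self (d i)))
      (by simpa using h0.norm)
  have hπz : Tendsto (fun i => π (star (d i) * d i)) l (𝓝 (star z * z)) := by
    simpa only [map_mul, map_star] using hπd.star.mul hπd
  exact (CStarRing.star_mul_self_eq_zero_iff z).mp (tendsto_nhds_unique hπz hπ0)

theorem norm_apply_add_I_smul_le [StarModule ℂ A] {h k : A}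
    (hh : h ∈ closure (selfAdjoint A : Set A)) (hk : k ∈ closure (selfAdjoint A : Set A)) :
    ‖π (h + I • k)‖ ≤ ‖h‖ + ‖k‖ := by
  obtain ⟨y, hy, hy_le⟩ := π.exists_tendsto_nhdsWithin_selfAdjoint hh
  obtain ⟨w, hw, hw_le⟩ := π.exists_tendsto_nhdsWithin_selfAdjoint hk
  have := mem_closure_iff_nhdsWithin_neBot.mp hh
  have := mem_closure_iff_nhdsWithin_neBot.mp hk
  set l := 𝓝[selfAdjoint A] h ×ˢ 𝓝[selfAdjoint A] k
  have hl : l ≤ 𝓝 (h, k) := by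
    rw [nhds_prod_eq]
    exact prod_mono nhdsWithin_le_nhds nhdsWithin_le_nhds
  have hl_sa : ∀ᶠ p in l, IsSelfAdjoint p.1 ∧ IsSelfAdjoint p.2 :=
    prod_mem_prod self_mem_nhdsWithin self_mem_nhdsWithin
  let d : A × A → A := fun p => h + I • k - p.1 - I • p.2
  have hd : Tendsto d l (𝓝 0) :=
    ((show Continuous d from (continuous_const.sub continuous_fst).sub
      (continuous_snd.const_smul I)).tendsto' (h, k) 0 (by simp [d])).mono_left hl
  have hds : Tendsto (fun p => star (d p)) l (𝓝 (star (h + I • k) - h + I • k)) := by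
    have hg : Tendsto (fun p : A × A => star (h + I • k) - p.1 + I • p.2) l
        (𝓝 (star (h + I • k) - h + I • k)) :=
      ((by fun_prop : Continuous fun p : A × A => star (h + I • k) - p.1 + I • p.2).tendsto
        (h, k)).mono_left hl
    refine hg.congr' ?_
    filter_upwards [hl_sa] with p ⟨hp₁, hp₂⟩
    simp only [d]
    rw [star_sub, star_sub, star_smul, hp₁.star_eq, hp₂.star_eq, Complex.star_def,
      Complex.conj_I, neg_smul, sub_neg_eq_add]
  have hπd : Tendsto (fun p => π (d p)) l (𝓝 (π (h + I • k) - y - I • w)) := by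
    simpa [d] using (tendsto_const_nhds.sub (hy.comp tendsto_fst)).sub
      ((hw.comp tendsto_snd).const_smul I)
  have hπx : π (h + I • k) = y + I • w := by
    rw [← sub_eq_zero, ← sub_sub]
    exact π.eq_zero_of_tendsto_of_tendsto_star hd hds hπd
  rw [hπx]
  calc ‖y + I • w‖ ≤ ‖y‖ + ‖w‖ := by simpa [norm_smul] using norm_add_le y (I • w)
    _ ≤ ‖h‖ + ‖k‖ := add_le_add hy_le hw_le

end NonUnitalStarAlgHom

/-- Every `*`-algebra homomorphism from a (not necessarily unital) Banach `*`-algebra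
(with possibly discontinuous involution) to a C*-algebra is continuous. -/
theorem continuous_starAlgHom_of_banach_to_cstar
    {A B : Type*}
    [NonUnitalNormedRing A] [CompleteSpace A] [NormedSpace ℂ A]
    [IsScalarTower ℂ A A] [SMulCommClass ℂ A A] [StarRing A] [StarModule ℂ A]
    [NonUnitalNormedRing B] [CompleteSpace B] [NormedSpace ℂ B]
    [IsScalarTower ℂ B B] [SMulCommClass ℂ B B] [StarRing B] [CStarRing B]
    [StarModule ℂ B]
    (π : A →⋆ₙₐ[ℂ] B) : Continuous π := by
  let : NonUnitalCStarAlgebra B := {}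
  obtain ⟨C, hC⟩ := exists_decomposition_closure_selfAdjoint_norm_le (A := A)
  refine AddMonoidHomClass.continuous_of_bound π C fun a => ?_
  obtain ⟨h, hh, k, hk, rfl, hle⟩ := hC a
  exact (π.norm_apply_add_I_smul_le hh hk).trans hle
end

section
/- Let A be a normed *-algebra (involution not assumed continuous), let H be a complex Hilbert space, and let π : A → B(H) be a *-algebra homomorphism into the bounded operators on H. Assume π is weakly continuous on the Hermitian part of A: for each x ∈ H there is a constant C ≥ 0 such that |⟨π(a)x, x⟩| ≤ C‖a‖ for all Hermitian a ∈ A. Then ‖π(a)‖ ≤ r_σ(a) for every a ∈ A, where r_σ(a) := (inf_{n ≥ 1} ‖(a* a)^n‖^{1/n})^{1/2}. -/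
/-!
Testing the weak bound on `x` against `c * c` gives `‖π c x‖² ≤ C_x ‖c‖²` for Hermitian `c`, so by
Banach–Steinhaus `‖π c‖ ≤ C ‖c‖` uniformly on the Hermitian part. For Hermitian `b = a* a` the
operator `S = π b` is self-adjoint, so `‖S‖ᵐ = ‖Sᵐ‖` in the C*-algebra `B(H)`; applying the
uniform bound to the Hermitian element `(b^(n+1))^(k+1)` gives
`‖S‖^((n+1)(k+1)) ≤ C ‖b^(n+1)‖^(k+1)`, and taking `(k+1)`-th roots as `k → ∞` removes `C`.
Finally `‖S‖ = ‖π a‖²` by the C*-identity.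
-/

/-- `nupow b n = b ^ (n + 1)`, the `(n+1)`-st power of `b`, which makes sense in a
not necessarily unital algebra. -/
def nupow {A : Type*} [Mul A] (b : A) : ℕ → A
  | 0 => b
  | n + 1 => nupow b n * b

open Filter

theorem commute_nupow {A : Type*} [Semigroup A] (b : A) (n : ℕ) : Commute b (nupow b n) := by
  induction n with
  | zero => exact Commute.refl b
  | succ n ih => exact ih.mul_right (Commute.refl b)

theorem IsSelfAdjoint.nupow {A : Type*} [Semigroup A] [StarMul A] {b : A}
    (hb : IsSelfAdjoint b) (n : ℕ) : IsSelfAdjoint (_root_.nupow b n) := by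
  induction n with
  | zero => exact hb
  | succ n ih =>
    change star (_root_.nupow b n * b) = _root_.nupow b n * b
    rw [star_mul, ih.star_eq, hb.star_eq, (commute_nupow b n).eq]

theorem map_nupow {A M F : Type*} [Mul A] [Monoid M] [FunLike F A M] [MulHomClass F A M]
    (f : F) (b : A) (n : ℕ) : f (nupow b n) = f b ^ (n + 1) := by
  induction n with
  | zero => simp [nupow]
  | succ n ih => rw [nupow, map_mul, ih, ← pow_succ]

theorem norm_nupow_le {A : Type*} [NonUnitalSeminormedRing A] (b : A) (n : ℕ) :
    ‖nupow b n‖ ≤ ‖b‖ ^ (n + 1) := by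
  induction n with
  | zero => simp [nupow]
  | succ n ih =>
    calc ‖nupow b n * b‖ ≤ ‖nupow b n‖ * ‖b‖ := norm_mul_le _ _
      _ ≤ ‖b‖ ^ (n + 1) * ‖b‖ := by gcongr
      _ = ‖b‖ ^ (n + 2) := (pow_succ _ _).symm

theorem le_of_forall_pow_succ_le_mul_pow_succ {x y C : ℝ} (hy : 0 ≤ y)
    (h : ∀ k : ℕ, x ^ (k + 1) ≤ C * y ^ (k + 1)) : x ≤ y := by
  by_contra! hyx
  have hx : 0 < x := hy.trans_lt hyx
  have hratio : Tendsto (fun k : ℕ => C * (y / x) ^ (k + 1)) atTop (nhds 0) := by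
    simpa using ((tendsto_pow_atTop_nhds_zero_of_lt_one (div_nonneg hy hx.le)
      ((div_lt_one hx).2 hyx)).comp (tendsto_add_atTop_nat 1)).const_mul C
  obtain ⟨k, hk⟩ := (hratio.eventually_lt_const one_pos).exists
  refine hk.not_ge ?_
  rw [div_pow, ← mul_div_assoc, one_le_div (pow_pos hx _)]
  exact h k

theorem IsSelfAdjoint.norm_pow_le_norm_pow {E : Type*} [NormedRing E] [StarRing E] [CStarRing E]
    {x : E} (hx : IsSelfAdjoint x) {n : ℕ} (hn : n ≠ 0) : ‖x‖ ^ n ≤ ‖x ^ n‖ := by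
  rcases (norm_nonneg x).eq_or_lt with h0 | hpos
  · rw [← h0, zero_pow hn]
    exact norm_nonneg _
  -- `x ^ 2 ^ n` has norm exactly `‖x‖ ^ 2 ^ n`; split off `x ^ n` and cancel the rest.
  have hn2 : n < 2 ^ n := Nat.lt_two_pow_self
  have hsplit : ‖x‖ ^ n * ‖x‖ ^ (2 ^ n - n) ≤ ‖x ^ n‖ * ‖x‖ ^ (2 ^ n - n) :=
    calc ‖x‖ ^ n * ‖x‖ ^ (2 ^ n - n) = ‖x ^ n * x ^ (2 ^ n - n)‖ := by
          rw [← pow_add, ← pow_add, Nat.add_sub_cancel' hn2.le, hx.norm_pow_two_pow]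
      _ ≤ ‖x ^ n‖ * ‖x‖ ^ (2 ^ n - n) := by
          refine (norm_mul_le _ _).trans ?_
          gcongr
          exact norm_pow_le' x (Nat.sub_pos_of_lt hn2)
  exact le_of_mul_le_mul_right hsplit (pow_pos hpos _)

theorem exists_opNorm_le_mul_of_forall_norm_apply_le_mul {𝕜 E F ι : Type*} [RCLike 𝕜]
    [NormedAddCommGroup E] [NormedSpace 𝕜 E] [CompleteSpace E]
    [NormedAddCommGroup F] [NormedSpace 𝕜 F]
    {g : ι → E →L[𝕜] F} {w : ι → ℝ} (hw : ∀ i, 0 ≤ w i)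
    (h : ∀ x, ∃ D, ∀ i, ‖g i x‖ ≤ D * w i) : ∃ C, 0 ≤ C ∧ ∀ i, ‖g i‖ ≤ C * w i := by
  have norm_inv_weight (i : ι) : ‖((w i)⁻¹ : 𝕜)‖ = (w i)⁻¹ := by
    rw [norm_inv, RCLike.norm_ofReal, abs_of_nonneg (hw i)]
  obtain ⟨C, hC⟩ := banach_steinhaus (g := fun i => ((w i)⁻¹ : 𝕜) • g i) fun x => by
    obtain ⟨D, hD⟩ := h x
    refine ⟨|D|, fun i => ?_⟩
    rw [smul_apply, norm_smul, norm_inv_weight]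
    rcases (hw i).eq_or_lt with h0 | hpos
    · simp [← h0]
    · rw [inv_mul_le_iff₀ hpos]
      exact (hD i).trans (by rw [mul_comm]; gcongr; exact le_abs_self D)
  refine ⟨max C 0, le_max_right _ _, fun i => ?_⟩
  rcases (hw i).eq_or_lt with h0 | hpos
  · have hgi : g i = 0 := ContinuousLinearMap.ext fun x => by
      obtain ⟨D, hD⟩ := h x
      simpa [← h0] using hD i
    simp [hgi, ← h0]
  · have hCi := hC i
    rw [norm_smul, norm_inv_weight, inv_mul_le_iff₀ hpos] at hCi
    exact hCi.trans (by rw [mul_comm]; gcongr; exact le_max_left C 0)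

section Representation

variable {𝕜 A H F : Type*} [RCLike 𝕜] [NonUnitalNormedRing A] [StarRing A]
  [NormedAddCommGroup H] [InnerProductSpace 𝕜 H] [CompleteSpace H]
  [FunLike F A (H →L[𝕜] H)] [MulHomClass F A (H →L[𝕜] H)] [StarHomClass F A (H →L[𝕜] H)]

theorem norm_map_apply_sq_le_norm_inner_map_star_mul_self (π : F) (c : A) (x : H) :
    ‖π c x‖ ^ 2 ≤ ‖inner 𝕜 (π (star c * c) x) x‖ := by
  rw [map_mul, map_star, ContinuousLinearMap.star_eq_adjoint,
    ContinuousLinearMap.apply_norm_sq_eq_inner_adjoint_left]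
  exact RCLike.re_le_norm _

theorem exists_norm_map_le_mul_norm_of_weakly_bounded (π : F)
    (hw : ∀ x : H, ∃ C : ℝ, 0 ≤ C ∧
      ∀ a : A, IsSelfAdjoint a → ‖(inner 𝕜 (π a x) x : 𝕜)‖ ≤ C * ‖a‖) :
    ∃ C, 0 ≤ C ∧ ∀ c : A, IsSelfAdjoint c → ‖π c‖ ≤ C * ‖c‖ := by
  suffices ∃ C, 0 ≤ C ∧ ∀ c : {c : A // IsSelfAdjoint c}, ‖π c‖ ≤ C * ‖(c : A)‖ by
    obtain ⟨C, hC0, hC⟩ := this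
    exact ⟨C, hC0, fun c hc => hC ⟨c, hc⟩⟩
  refine exists_opNorm_le_mul_of_forall_norm_apply_le_mul (fun _ => norm_nonneg _) fun x => ?_
  obtain ⟨D, hD0, hD⟩ := hw x
  refine ⟨√D, fun ⟨c, hc⟩ => ?_⟩
  rw [← Real.sqrt_sq (norm_nonneg (c : A)), ← Real.sqrt_mul hD0]
  refine Real.le_sqrt_of_sq_le ((norm_map_apply_sq_le_norm_inner_map_star_mul_self π c x).trans ?_)
  calc _ ≤ D * ‖star c * c‖ := hD _ (.star_mul_self c)
    _ ≤ D * ‖c‖ ^ 2 := by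
        gcongr
        simpa [hc.star_eq, sq] using norm_mul_le c c

end Representation

theorem norm_map_pow_succ_le_norm_nupow {A B F : Type*} [NonUnitalSeminormedRing A] [StarRing A]
    [NormedRing B] [StarRing B] [CStarRing B]
    [FunLike F A B] [MulHomClass F A B] [StarHomClass F A B] (f : F) {C : ℝ} (hC0 : 0 ≤ C)
    (hC : ∀ c, IsSelfAdjoint c → ‖f c‖ ≤ C * ‖c‖) {b : A} (hb : IsSelfAdjoint b) (n : ℕ) :
    ‖f b‖ ^ (n + 1) ≤ ‖nupow b n‖ := by
  refine le_of_forall_pow_succ_le_mul_pow_succ (C := C) (norm_nonneg _) fun k => ?_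
  calc (‖f b‖ ^ (n + 1)) ^ (k + 1) = ‖f b‖ ^ ((n + 1) * (k + 1)) := (pow_mul _ _ _).symm
    _ ≤ ‖f b ^ ((n + 1) * (k + 1))‖ := (hb.map f).norm_pow_le_norm_pow (by positivity)
    _ = ‖f (nupow (nupow b n) k)‖ := by rw [map_nupow, map_nupow, pow_mul]
    _ ≤ C * ‖nupow (nupow b n) k‖ := hC _ ((hb.nupow n).nupow k)
    _ ≤ C * ‖nupow b n‖ ^ (k + 1) := by gcongr; exact norm_nupow_le _ _

theorem norm_apply_le_ptak_of_weakly_continuous_general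
    {A : Type*} [NonUnitalNormedRing A] [NormedSpace ℂ A]
    [StarRing A]
    {H : Type*} [NormedAddCommGroup H] [InnerProductSpace ℂ H] [CompleteSpace H]
    (π : A →⋆ₙₐ[ℂ] (H →L[ℂ] H))
    (hw : ∀ x : H, ∃ C : ℝ, 0 ≤ C ∧
      ∀ a : A, IsSelfAdjoint a → ‖(inner ℂ (π a x) x : ℂ)‖ ≤ C * ‖a‖) :
    ∀ a : A, ‖π a‖ ≤
      Real.sqrt (⨅ n : ℕ, ‖nupow (star a * a) n‖ ^ (1 / (n + 1 : ℝ))) := by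
  obtain ⟨C, hC0, hC⟩ := exists_norm_map_le_mul_norm_of_weakly_bounded π hw
  intro a
  have hnorm : ‖π (star a * a)‖ = ‖π a‖ ^ 2 := by
    rw [map_mul, map_star, CStarRing.norm_star_mul_self, sq]
  refine Real.le_sqrt_of_sq_le (hnorm ▸ le_ciInf fun n => ?_)
  rw [one_div, ← Nat.cast_add_one, Real.le_rpow_inv_iff_of_pos (norm_nonneg _) (norm_nonneg _)
    (by positivity), Real.rpow_natCast]
  exact norm_map_pow_succ_le_norm_nupow π hC0 hC (.star_mul_self a) n

/-- If a representation `π` of a normed `*`-algebra `A` on a Hilbert space `H` is weakly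
continuous on the Hermitian part of `A`, then `‖π a‖ ≤ r_σ(a)` for every `a ∈ A`, where
`r_σ(a) = (inf_{n ≥ 1} ‖(a* a)^n‖^(1/n))^(1/2)` is the Pták function. -/
theorem norm_apply_le_ptak_of_weakly_continuous
    {A : Type*} [NonUnitalNormedRing A] [NormedSpace ℂ A]
    [IsScalarTower ℂ A A] [SMulCommClass ℂ A A] [StarRing A] [StarModule ℂ A]
    {H : Type*} [NormedAddCommGroup H] [InnerProductSpace ℂ H] [CompleteSpace H]
    (π : A →⋆ₙₐ[ℂ] (H →L[ℂ] H))
    (hw : ∀ x : H, ∃ C : ℝ, 0 ≤ C ∧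
      ∀ a : A, IsSelfAdjoint a → ‖(inner ℂ (π a x) x : ℂ)‖ ≤ C * ‖a‖) :
    ∀ a : A, ‖π a‖ ≤
      Real.sqrt (⨅ n : ℕ, ‖nupow (star a * a) n‖ ^ (1 / (n + 1 : ℝ))) :=
  norm_apply_le_ptak_of_weakly_continuous_general π hw
end

section
/- (Fuglede–Putnam–Rosenblum) Let A be a unital C*-algebra, let n₁ and n₂ be normal elements of A, and let a ∈ A satisfy a·n₁ = n₂·a. Then a·n₁* = n₂*·a. -/
namespace FPRPort

/-- (Fuglede–Putnam–Rosenblum) If `n₁`, `n₂` are normal elements of a unital C*-algebra and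
`a * n₁ = n₂ * a`, then `a * n₁* = n₂* * a`. -/
theorem fuglede_putnam_rosenblum
    {A : Type*} [NormedRing A] [StarRing A] [CStarRing A]
    [NormedAlgebra ℂ A] [CompleteSpace A] [StarModule ℂ A]
    (n₁ n₂ a : A) (h₁ : IsStarNormal n₁) (h₂ : IsStarNormal n₂)
    (h : a * n₁ = n₂ * a) : a * star n₁ = star n₂ * a :=
  letI : CStarAlgebra A := {}
  SemiconjBy.star_right h₁ h₂ h
end FPRPort
end
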